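/- arXiv:2408.14661 — 8 statements merged into one kernel-verified Lean document; each statement's English description precedes it below -/
import Mathlib

section
/- Let V be a finite set with |V| = n ≥ 1 and let y_1, …, y_N (N ≥ 1) be lists, each a permutation of V. Let h^int be their intersection order. Then: (a) h^int is a partial order on V; (b) every y_j is a linear extension of h^int; and (c) for every partial order h on V with h ≠ h^int, ∏_{j=1}^N 1_{y_j ∈ L[h]} / |L[h]|^N < 1 / |L[h^int]|^N. Hence the intersection order is the unique maximizer, over all partial orders h on V, of the likelihood ∏_{j=1}^N 1_{y_j ∈ L[h]} / |L[h]| arising from the noise-free observation model in which each list is drawn uniformly at random from the linear extensions of h. -/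
/-- A (strict) partial order on `V`: an irreflexive transitive binary relation. -/
def IsPartialOrderOn {V : Type*} (r : V → V → Prop) : Prop :=
  (∀ a, ¬ r a a) ∧ (∀ a b c, r a b → r b c → r a c)

/-- `l` is a linear extension of the partial order `r`: it enumerates `V` without
repetition and for `a < b` it is not the case that `l_b ≻ l_a`. -/
def IsLinext {V : Type*} (r : V → V → Prop) (l : List V) : Prop :=
  l.Nodup ∧ (∀ v : V, v ∈ l) ∧
    ∀ a b : Fin l.length, a < b → ¬ r (l.get b) (l.get a)

/-- `i` appears (strictly) before `j` in the list `l`. -/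
def Before {V : Type*} [DecidableEq V] (l : List V) (i j : V) : Prop :=
  l.idxOf i < l.idxOf j


/-!
Each `y_j` is a linear extension of `h` exactly when `h` is contained in the order of `y_j`,
so the likelihood of `h` vanishes unless `h ⊆ h^int`. If `h ⊊ h^int`, pick `a ≻ b` in `h^int`
but not in `h`; by Szpilrajn's theorem applied to `h` with `b ≻ a` adjoined, some linear
extension of `h` puts `b` before `a`, so it is not one of `h^int`. Hence `L[h^int] ⊊ L[h]`, and
the likelihood `1 / |L[h]|^N` of `h` is strictly smaller than that of `h^int`.
-/

section LinearExtensions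

variable {V : Type*}

theorem IsLinext.mono {r r' : V → V → Prop} {l : List V} (hl : IsLinext r' l) (h : r ≤ r') :
    IsLinext r l :=
  ⟨hl.1, hl.2.1, fun a b hab hba => hl.2.2 a b hab (h _ _ hba)⟩

theorem IsPartialOrderOn.isStrictOrder {r : V → V → Prop} (hr : IsPartialOrderOn r) :
    IsStrictOrder V r :=
  { irrefl := hr.1, trans := hr.2 }

theorem isLinext_iff_forall_before [DecidableEq V] {r : V → V → Prop} (hirr : ∀ a, ¬ r a a)
    {l : List V} (hnd : l.Nodup) (hmem : ∀ v, v ∈ l) :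
    IsLinext r l ↔ ∀ i j, r i j → Before l i j := by
  have hidx : ∀ v, l.idxOf v < l.length := fun v => List.idxOf_lt_length_iff.2 (hmem v)
  constructor
  · rintro ⟨-, -, hl⟩ i j hij
    refine lt_of_le_of_ne (not_lt.1 fun hji => ?_) fun h => hirr i ?_
    · exact hl ⟨_, hidx j⟩ ⟨_, hidx i⟩ hji (by simpa [List.getElem_idxOf] using hij)
    · rwa [(List.idxOf_inj (hmem i)).1 h] at hij ⊢
  · intro h
    refine ⟨hnd, hmem, fun a b hab hba => lt_asymm (Fin.lt_def.1 hab) ?_⟩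
    simpa [Before, hnd.idxOf_getElem] using h _ _ hba

theorem finite_setOf_isLinext [Finite V] (r : V → V → Prop) : {l | IsLinext r l}.Finite := by
  have := Fintype.ofFinite V
  exact (List.finite_length_le V (Fintype.card V)).subset fun l hl => hl.1.length_le_card

theorem exists_isLinext_of_le [Finite V] {r : V → V → Prop} (le : V → V → Prop)
    [IsPartialOrder V le] (hr : r ≤ le) : ∃ l, IsLinext r l := by
  obtain ⟨s, hs, hle⟩ := extend_partialOrder le
  have := hs
  have := Fintype.ofFinite V
  classical
  have hsorted : (Finset.univ.sort s).Pairwise s := Finset.pairwise_sort _ _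
  have hnd : (Finset.univ.sort s).Nodup := Finset.sort_nodup _ _
  refine ⟨Finset.univ.sort s, hnd, fun v => (Finset.mem_sort s).2 (Finset.mem_univ v),
    fun a b hab hba => hab.ne ?_⟩
  exact hnd.get_inj_iff.1 (antisymm (hsorted.rel_get_of_lt hab) (hle _ _ (hr _ _ hba)))

theorem isPartialOrder_adjoin_le (le : V → V → Prop) [IsPartialOrder V le] {a b : V}
    (hab : ¬ le a b) : IsPartialOrder V (fun x z => le x z ∨ le x b ∧ le a z) where
  refl x := Or.inl (refl x)
  trans := by
    rintro x y z (hxy | ⟨hxb, hay⟩) (hyz | ⟨hyb, haz⟩)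
    · exact Or.inl (_root_.trans hxy hyz)
    · exact Or.inr ⟨_root_.trans hxy hyb, haz⟩
    · exact Or.inr ⟨hxb, _root_.trans hay hyz⟩
    · exact Or.inr ⟨hxb, haz⟩
  antisymm := by
    rintro x y (hxy | ⟨hxb, hay⟩) (hyx | ⟨hyb, hax⟩)
    · exact antisymm hxy hyx
    · exact (hab (_root_.trans hax (_root_.trans hxy hyb))).elim
    · exact (hab (_root_.trans hay (_root_.trans hyx hxb))).elim
    · exact (hab (_root_.trans hay hyb)).elim

theorem exists_isLinext_before [DecidableEq V] [Finite V] {r : V → V → Prop}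
    (hr : IsPartialOrderOn r) {a b : V} (hne : a ≠ b) (hab : ¬ r a b) :
    ∃ l, IsLinext r l ∧ Before l b a := by
  have := hr.isStrictOrder
  let := partialOrderOfSO r
  have := isPartialOrder_adjoin_le (· ≤ ·) (show ¬ a ≤ b from not_or.2 ⟨hne, hab⟩)
  let r' : V → V → Prop := fun x z => x ≠ z ∧ (x ≤ z ∨ x ≤ b ∧ a ≤ z)
  obtain ⟨l, hl⟩ := exists_isLinext_of_le (r := r') _ fun _ _ h => h.2
  have hr_le : r ≤ r' := fun x z (h : x < z) => ⟨h.ne, Or.inl h.le⟩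
  refine ⟨l, hl.mono hr_le, ?_⟩
  exact (isLinext_iff_forall_before (fun x h => h.1 rfl) hl.1 hl.2.1).1 hl b a
    ⟨hne.symm, Or.inr ⟨le_rfl, le_rfl⟩⟩

theorem ncard_setOf_isLinext_lt [Finite V] {r r' : V → V → Prop} (hr : IsPartialOrderOn r)
    (hirr' : ∀ a, ¬ r' a a) (hlt : r < r') :
    {l | IsLinext r' l}.ncard < {l | IsLinext r l}.ncard := by
  classical
  obtain ⟨a, b, hab, hnab⟩ : ∃ a b, r' a b ∧ ¬ r a b := by
    by_contra! h
    exact hlt.not_ge h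
  obtain ⟨l, hl, hba⟩ := exists_isLinext_before hr (by rintro rfl; exact hirr' a hab) hnab
  refine Set.ncard_lt_ncard ⟨fun l' hl' => hl'.mono hlt.le, fun hsub => ?_⟩
    (finite_setOf_isLinext r)
  have hab_before := (isLinext_iff_forall_before hirr' hl.1 hl.2.1).1 (hsub hl) a b hab
  exact lt_asymm hba hab_before

section IntersectionOrder

variable [DecidableEq V] {ι : Type*} (y : ι → List V)

def intersectionOrder (i j : V) : Prop :=
  ∀ k, Before (y k) i j

theorem isPartialOrderOn_intersectionOrder [Nonempty ι] :
    IsPartialOrderOn (intersectionOrder y) :=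
  ⟨fun _ h => lt_irrefl _ (h (Classical.arbitrary ι)),
    fun _ _ _ hab hbc k => (hab k).trans (hbc k)⟩

variable {y}

theorem isLinext_intersectionOrder {k : ι} (hnd : (y k).Nodup) (hmem : ∀ v, v ∈ y k) :
    IsLinext (intersectionOrder y) (y k) :=
  (isLinext_iff_forall_before (fun _ h => lt_irrefl _ (h k)) hnd hmem).2 fun _ _ h => h k

theorem le_intersectionOrder {r : V → V → Prop} (hr : ∀ a, ¬ r a a)
    (hy : ∀ k, (y k).Nodup ∧ ∀ v, v ∈ y k) (h : ∀ k, IsLinext r (y k)) :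
    r ≤ intersectionOrder y :=
  fun i j hij k => (isLinext_iff_forall_before hr (hy k).1 (hy k).2).1 (h k) i j hij

end IntersectionOrder

end LinearExtensions

open Classical in
theorem intersection_order_is_MLE_general
    {V : Type*} [DecidableEq V]
    (N : ℕ) (hN : 1 ≤ N) (y : Fin N → List V)
    (hperm : ∀ j, (y j).Nodup ∧ ∀ v : V, v ∈ y j) :
    -- (a) the intersection order is a partial order on V
    IsPartialOrderOn (fun i j : V => ∀ k : Fin N, Before (y k) i j) ∧
    -- (b) every list y_j is a linear extension of the intersection order
    (∀ j : Fin N, IsLinext (fun i j : V => ∀ k : Fin N, Before (y k) i j) (y j)) ∧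
    -- (c) every other partial order has strictly smaller likelihood
    (∀ r : V → V → Prop, IsPartialOrderOn r →
      r ≠ (fun i j : V => ∀ k : Fin N, Before (y k) i j) →
      (∏ j : Fin N, (if IsLinext r (y j) then (1:ℝ) else 0)) /
          (({l : List V | IsLinext r l}.ncard : ℝ)) ^ N
        < 1 / (({l : List V |
            IsLinext (fun i j : V => ∀ k : Fin N, Before (y k) i j) l}.ncard : ℝ)) ^ N) := by
  let j₀ : Fin N := ⟨0, hN⟩
  have : Nonempty (Fin N) := ⟨j₀⟩
  have : Finite V := Finite.of_surjective (y j₀).get fun v => List.get_of_mem ((hperm j₀).2 v)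
  have hint := isPartialOrderOn_intersectionOrder y
  have hlin : ∀ j, IsLinext (intersectionOrder y) (y j) :=
    fun j => isLinext_intersectionOrder (hperm j).1 (hperm j).2
  refine ⟨hint, hlin, fun r hr hne => ?_⟩
  have hpos : 0 < {l | IsLinext (intersectionOrder y) l}.ncard :=
    (Set.ncard_pos (finite_setOf_isLinext _)).2 ⟨_, hlin j₀⟩
  rw [Fintype.prod_boole]
  split_ifs with hall
  · have hlt := ncard_setOf_isLinext_lt hr hint.1
      (lt_of_le_of_ne (le_intersectionOrder hr.1 hperm hall) hne)
    change 1 / _ < 1 / ({l | IsLinext (intersectionOrder y) l}.ncard : ℝ) ^ N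
    gcongr
  · rw [zero_div]
    positivity

open Classical in
theorem intersection_order_is_MLE
    {V : Type*} [Fintype V] [DecidableEq V] (n : ℕ) (hn : 1 ≤ n)
    (hcard : Fintype.card V = n)
    (N : ℕ) (hN : 1 ≤ N) (y : Fin N → List V)
    (hperm : ∀ j, (y j).Nodup ∧ ∀ v : V, v ∈ y j) :
    -- (a) the intersection order is a partial order on V
    IsPartialOrderOn (fun i j : V => ∀ k : Fin N, Before (y k) i j) ∧
    -- (b) every list y_j is a linear extension of the intersection order
    (∀ j : Fin N, IsLinext (fun i j : V => ∀ k : Fin N, Before (y k) i j) (y j)) ∧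
    -- (c) every other partial order has strictly smaller likelihood
    (∀ r : V → V → Prop, IsPartialOrderOn r →
      r ≠ (fun i j : V => ∀ k : Fin N, Before (y k) i j) →
      (∏ j : Fin N, (if IsLinext r (y j) then (1:ℝ) else 0)) /
          (({l : List V | IsLinext r l}.ncard : ℝ)) ^ N
        < 1 / (({l : List V |
            IsLinext (fun i j : V => ∀ k : Fin N, Before (y k) i j) l}.ncard : ℝ)) ^ N) :=
  intersection_order_is_MLE_general N hN y hperm
end

section
/- The queue-jumping observation model with error probability p = 0 reduces to the uniform distribution on linear extensions: for every partial order h on a finite set V of size n and every linear extension l = (l_1, …, l_n) ∈ L[h], ∏_{i=1}^{n-1} L_{l_i}(h[{l_i, l_{i+1}, …, l_n}]) / L(h[{l_i, l_{i+1}, …, l_n}]) = 1 / |L[h]|, where L(g) = |L[g]| and L_k(g) is the number of linear extensions of g whose first element is k. -/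
/-- `l` is a linear extension of the suborder `h[o]` of the partial order `r`:
it enumerates `o` without repetition and for `a < b` it is not the case
that `l_b ≻ l_a`. -/
def IsLinextOn {V : Type*} (r : V → V → Prop) (o : Set V) (l : List V) : Prop :=
  l.Nodup ∧ (∀ v : V, v ∈ l ↔ v ∈ o) ∧
    ∀ a b : Fin l.length, a < b → ¬ r (l.get b) (l.get a)

namespace IsLinextOn

variable {V : Type*} {r : V → V → Prop}

theorem iff_pairwise {o : Set V} {m : List V} :
    IsLinextOn r o m ↔ m.Nodup ∧ (∀ v, v ∈ m ↔ v ∈ o) ∧ m.Pairwise (fun a b => ¬ r b a) := by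
  rw [IsLinextOn, List.pairwise_iff_get]

theorem self {l : List V} (hnd : l.Nodup) (hpw : l.Pairwise (fun a b => ¬ r b a)) :
    IsLinextOn r {v | v ∈ l} l :=
  iff_pairwise.2 ⟨hnd, fun _ => Iff.rfl, hpw⟩

theorem perm {l m : List V} (hl : l.Nodup) (hm : IsLinextOn r {v | v ∈ l} m) : m.Perm l :=
  (List.perm_ext_iff_of_nodup hm.1 hl).2 hm.2.1

theorem cons_iff {x : V} {s t : List V} (hx : x ∉ t) (hmin : ∀ v ∈ t, ¬ r v x) :
    IsLinextOn r {v | v ∈ x :: t} (x :: s) ↔ IsLinextOn r {v | v ∈ t} s := by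
  simp only [iff_pairwise, List.nodup_cons, List.pairwise_cons, List.mem_cons, Set.mem_ofPred_eq]
  constructor
  · rintro ⟨⟨hxs, hnd⟩, hmem, -, hpw⟩
    refine ⟨hnd, fun v => ?_, hpw⟩
    grind
  · rintro ⟨hnd, hmem, hpw⟩
    refine ⟨⟨fun h => hx ((hmem x).1 h), hnd⟩, fun v => ?_, fun v hv => hmin v ((hmem v).1 hv), hpw⟩
    grind

end IsLinextOn

section Counting

variable {V : Type*} (r : V → V → Prop)

/-- `L(h[o])` in the paper's notation. -/
noncomputable def numLinext (o : Set V) : ℕ := {m : List V | IsLinextOn r o m}.ncard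

/-- `L_x(h[o])`, with the head `x` given as an `Option` to match `List.head?`. -/
noncomputable def numLinextHead (o : Set V) (x : Option V) : ℕ :=
  {m : List V | IsLinextOn r o m ∧ m.head? = x}.ncard

variable {r}

theorem finite_setOf_isLinextOn {l : List V} (hl : l.Nodup) :
    {m : List V | IsLinextOn r {v | v ∈ l} m}.Finite :=
  l.permutations.finite_toSet.subset fun _ hm => List.mem_permutations.2 (hm.perm hl)

theorem numLinext_pos {l : List V} (hnd : l.Nodup) (hpw : l.Pairwise (fun a b => ¬ r b a)) :
    0 < numLinext r {v | v ∈ l} :=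
  (Set.ncard_pos (finite_setOf_isLinextOn hnd)).2 ⟨l, IsLinextOn.self hnd hpw⟩

theorem numLinext_eq_one_of_length_le_one {l : List V} (hl : l.length ≤ 1) :
    numLinext r {v | v ∈ l} = 1 := by
  obtain rfl | ⟨x, rfl⟩ : l = [] ∨ ∃ x, l = [x] := by
    rcases l with _ | ⟨x, _ | _⟩ <;> simp_all
  all_goals
    rw [numLinext, Set.ncard_eq_one]
    refine ⟨_, Set.eq_singleton_iff_unique_mem.2
      ⟨IsLinextOn.self (by simp) (by simp), fun m hm => ?_⟩⟩
    simpa using hm.perm (by simp)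

theorem numLinextHead_cons {x : V} {t : List V} (hx : x ∉ t) (hmin : ∀ v ∈ t, ¬ r v x) :
    numLinextHead r {v | v ∈ x :: t} (some x) = numLinext r {v | v ∈ t} := by
  have : {m : List V | IsLinextOn r {v | v ∈ x :: t} m ∧ m.head? = some x} =
      List.cons x '' {m : List V | IsLinextOn r {v | v ∈ t} m} := by
    ext m
    rcases m with _ | ⟨y, s⟩
    · simp
    · simp only [Set.mem_ofPred_eq, List.head?_cons, Option.some.injEq, Set.mem_image,
        List.cons.injEq]
      constructor
      · rintro ⟨h, rfl⟩
        exact ⟨s, (IsLinextOn.cons_iff hx hmin).1 h, rfl, rfl⟩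
      · rintro ⟨_, h, rfl, rfl⟩
        exact ⟨(IsLinextOn.cons_iff hx hmin).2 h, rfl⟩
  rw [numLinextHead, this, Set.ncard_image_of_injective _ List.cons_injective, numLinext]

theorem prod_numLinextHead_div_numLinext {l : List V} (hnd : l.Nodup)
    (hpw : l.Pairwise (fun a b => ¬ r b a)) :
    ∏ i ∈ Finset.range (l.length - 1),
        (numLinextHead r {v | v ∈ l.drop i} (l.drop i).head? / numLinext r {v | v ∈ l.drop i} : ℝ)
      = 1 / numLinext r {v | v ∈ l} := by
  induction l with
  | nil => rw [numLinext_eq_one_of_length_le_one (by simp)]; simp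
  | cons x t ih =>
    obtain rfl | ht := eq_or_ne t []
    · rw [numLinext_eq_one_of_length_le_one (by simp)]; simp
    obtain ⟨hx, hnd⟩ := List.nodup_cons.1 hnd
    obtain ⟨hmin, hpw⟩ := List.pairwise_cons.1 hpw
    have hpos : (0 : ℝ) < numLinext r {v | v ∈ t} := by exact_mod_cast numLinext_pos hnd hpw
    rw [List.length_cons, Nat.add_sub_cancel, ← Nat.sub_add_cancel (List.length_pos_iff.2 ht),
      Finset.prod_range_succ']
    simp only [List.drop_succ_cons, List.drop_zero, List.head?_cons]
    rw [numLinextHead_cons hx hmin, ih hnd hpw]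
    field_simp

end Counting

theorem queueJump_noise_free_general {V : Type*}
    (r : V → V → Prop)
    (l : List V) (hl : IsLinextOn r Set.univ l) :
    (∏ i ∈ Finset.range (l.length - 1),
        (({m : List V | IsLinextOn r {v : V | v ∈ l.drop i} m ∧
            m.head? = (l.drop i).head?}.ncard : ℝ) /
          ({m : List V | IsLinextOn r {v : V | v ∈ l.drop i} m}.ncard : ℝ)))
      = 1 / ({m : List V | IsLinextOn r Set.univ m}.ncard : ℝ) := by
  obtain ⟨hnd, hmem, hpw⟩ := IsLinextOn.iff_pairwise.1 hl
  have hentries : {v : V | v ∈ l} = Set.univ := Set.eq_univ_of_forall fun v => (hmem v).2 trivial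
  have := prod_numLinextHead_div_numLinext hnd hpw
  rwa [hentries] at this

theorem queueJump_noise_free {V : Type*} [Fintype V] (n : ℕ)
    (hcard : Fintype.card V = n)
    (r : V → V → Prop) (hr : IsPartialOrderOn r)
    (l : List V) (hl : IsLinextOn r Set.univ l) :
    (∏ i ∈ Finset.range (l.length - 1),
        (({m : List V | IsLinextOn r {v : V | v ∈ l.drop i} m ∧
            m.head? = (l.drop i).head?}.ncard : ℝ) /
          ({m : List V | IsLinextOn r {v : V | v ∈ l.drop i} m}.ncard : ℝ)))
      = 1 / ({m : List V | IsLinextOn r Set.univ m}.ncard : ℝ) :=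
  queueJump_noise_free_general r l hl
end

section
/- The family of uniform distributions over partial orders is not projective. Concretely: the number of partial orders on a labeled 3-element set is 19 and the number of partial orders on a labeled 2-element set is 3, and since 3 does not divide 19, there exists a partial order h on o = {1,2} such that |{h' a partial order on {1,2,3} : h'[o] = h}| / 19 ≠ 1/3; that is, the marginal on {1,2} of the uniform distribution over partial orders on {1,2,3} is not the uniform distribution over partial orders on {1,2}. -/
/-- The suborder of a partial order on `{1,2,3}` restricted to the first two elements. -/
def restrictTo2 (r : Fin 3 → Fin 3 → Prop) : Fin 2 → Fin 2 → Prop :=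
  fun i j => r (Fin.castLE (by omega) i) (Fin.castLE (by omega) j)

/-- Boolean-valued relation converted to a Prop-valued one. -/
def toProp {n : ℕ} (b : Fin n → Fin n → Bool) : Fin n → Fin n → Prop :=
  fun i j => b i j = true

lemma toProp_inj {n : ℕ} : Function.Injective (toProp (n := n)) := by
  intro b b' h
  funext i j
  have := congrFun (congrFun h i) j
  simp only [toProp, eq_iff_iff] at this
  cases hb : b i j <;> cases hb' : b' i j <;> simp [hb, hb'] at this ⊢

/-- Boolean partial-order predicate. -/
def isPOB {n : ℕ} (b : Fin n → Fin n → Bool) : Prop :=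
  (∀ a, b a a = false) ∧ (∀ x y z, b x y = true → b y z = true → b x z = true)

instance {n : ℕ} : DecidablePred (isPOB (n := n)) := fun _ => by
  unfold isPOB; infer_instance

lemma set_eq {n : ℕ} :
    {r : Fin n → Fin n → Prop | IsPartialOrderOn r} = toProp '' {b | isPOB b} := by
  ext r
  constructor
  · rintro ⟨hirr, htr⟩
    classical
    refine ⟨fun i j => decide (r i j), ⟨?_, ?_⟩, ?_⟩
    · intro a; simpa using hirr a
    · intro x y z hxy hyz
      simp only [decide_eq_true_iff] at *
      exact htr _ _ _ hxy hyz
    · funext i j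
      simp [toProp, decide_eq_true_iff]
  · rintro ⟨b, ⟨hirr, htr⟩, rfl⟩
    refine ⟨fun a h => ?_, fun x y z hxy hyz => htr x y z hxy hyz⟩
    rw [toProp] at h; rw [hirr a] at h; exact Bool.false_ne_true h

lemma ncard_PO {n : ℕ} :
    {r : Fin n → Fin n → Prop | IsPartialOrderOn r}.ncard
      = (Finset.univ.filter (isPOB (n := n))).card := by
  rw [set_eq, Set.ncard_image_of_injective _ toProp_inj]
  rw [show {b : Fin n → Fin n → Bool | isPOB b}
      = ↑(Finset.univ.filter (isPOB (n := n))) by ext b; simp]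
  exact Set.ncard_coe_finset _

set_option maxRecDepth 100000 in
theorem uniform_on_partial_orders_not_projective :
    {r : Fin 3 → Fin 3 → Prop | IsPartialOrderOn r}.ncard = 19 ∧
    {r : Fin 2 → Fin 2 → Prop | IsPartialOrderOn r}.ncard = 3 ∧
    ∃ h : Fin 2 → Fin 2 → Prop, IsPartialOrderOn h ∧
      (({r' : Fin 3 → Fin 3 → Prop | IsPartialOrderOn r' ∧ restrictTo2 r' = h}.ncard : ℝ)
          / 19 ≠ 1 / 3) := by
  refine ⟨?_, ?_, ?_⟩
  · rw [ncard_PO]; decide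
  · rw [ncard_PO]; decide
  · refine ⟨fun _ _ => False, ⟨fun a h => h, fun _ _ _ h _ => h⟩, ?_⟩
    have hset : {r' : Fin 3 → Fin 3 → Prop |
        IsPartialOrderOn r' ∧ restrictTo2 r' = fun _ _ => False}
        = toProp '' {b | isPOB b ∧ b 0 1 = false ∧ b 1 0 = false} := by
      ext r
      constructor
      · rintro ⟨⟨hirr, htr⟩, hres⟩
        classical
        have h01 : ¬ r 0 1 := by
          have := congrFun (congrFun hres 0) 1
          simp only [restrictTo2] at this
          exact fun hr => (this ▸ hr : False)
        have h10 : ¬ r 1 0 := by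
          have := congrFun (congrFun hres 1) 0
          simp only [restrictTo2] at this
          exact fun hr => (this ▸ hr : False)
        refine ⟨fun i j => decide (r i j), ⟨⟨?_, ?_⟩, ?_, ?_⟩, ?_⟩
        · intro a; simpa using hirr a
        · intro x y z hxy hyz
          simp only [decide_eq_true_iff] at *
          exact htr _ _ _ hxy hyz
        · simpa using h01
        · simpa using h10
        · funext i j; simp [toProp, decide_eq_true_iff]
      · rintro ⟨b, ⟨⟨hirr, htr⟩, h01, h10⟩, rfl⟩
        refine ⟨⟨fun a h => ?_, fun x y z hxy hyz => htr x y z hxy hyz⟩, ?_⟩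
        · rw [toProp] at h; rw [hirr a] at h; exact Bool.false_ne_true h
        · funext i j
          fin_cases i <;> fin_cases j <;>
            simp [restrictTo2, toProp, Fin.castLE, hirr, h01, h10]
    rw [hset, Set.ncard_image_of_injective _ toProp_inj]
    have : {b : Fin 3 → Fin 3 → Bool | isPOB b ∧ b 0 1 = false ∧ b 1 0 = false}
        = ↑(Finset.univ.filter fun b : Fin 3 → Fin 3 → Bool =>
            isPOB b ∧ b 0 1 = false ∧ b 1 0 = false) := by ext b; simp
    rw [this, Set.ncard_coe_finset]
    have hc : (Finset.univ.filter fun b : Fin 3 → Fin 3 → Bool =>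
        isPOB b ∧ b 0 1 = false ∧ b 1 0 = false).card = 7 := by decide
    rw [hc]
    norm_num
end

section
/- (Addition rule / projectivity of the Poisson–Dirichlet partition weights.) Fix real parameters 0 < η_a < 1 and η_b > 0, and for a partition S = (S_1, …, S_C) of {1,…,n} with block sizes n_c = |S_c| define P_{η,[n]}(S) = (Γ(η_b)/Γ(η_b+n)) · (η_a^C Γ(η_b/η_a + C)/Γ(η_b/η_a)) · ∏_{c=1}^C Γ(n_c − η_a)/Γ(1 − η_a). Then for every n ≥ 2 and every partition S' = (S_1, …, S_C) of {1,…,n−1}: ∑_{c=1}^C P_{η,[n]}(S' with the element n added to block S_c) + P_{η,[n]}((S_1, …, S_C, {n})) = P_{η,[n−1]}(S'). -/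
/-!
Adding the new element `n` to a block of size `n_c` multiplies the weight by `n_c - η_a`
(from `Γ(n_c + 1 - η_a) = (n_c - η_a) Γ(n_c - η_a)`), while opening a new block multiplies it by
`η_a (η_b/η_a + C) = η_b + C η_a`. Summed over all `C + 1` choices these factors give
`η_b + (n - 1)`, which is exactly the factor `Γ(η_b + n) / Γ(η_b + n - 1)` separating the
normalisations at `n` and `n - 1`.
-/

/-- The (ordered) Poisson–Dirichlet partition weight
`P_{η,[n]}(S) = (Γ(η_b)/Γ(η_b+n)) · η_a^C Γ(η_b/η_a + C)/Γ(η_b/η_a) ·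
∏_c Γ(n_c − η_a)/Γ(1 − η_a)`, where `C` is the number of blocks and `n_c` the block
sizes of the partition `S` (given as a list of blocks). -/
noncomputable def PDPweight (ηa ηb : ℝ) (n : ℕ) (blocks : List (Finset ℕ)) : ℝ :=
  (Real.Gamma ηb / Real.Gamma (ηb + n)) *
    (ηa ^ blocks.length * Real.Gamma (ηb / ηa + blocks.length) / Real.Gamma (ηb / ηa)) *
    (blocks.map (fun b => Real.Gamma ((b.card : ℝ) - ηa) / Real.Gamma (1 - ηa))).prod

theorem List.prod_map_set_of_eq_mul {α M : Type*} [CommMonoid M] (f : α → M) (l : List α)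
    {c : ℕ} (hc : c < l.length) {x : α} {r : M} (hx : f x = r * f l[c]) :
    ((l.set c x).map f).prod = r * (l.map f).prod := by
  have hc' : c < (l.map f).length := by simpa using hc
  rw [List.map_set, List.prod_set, if_pos hc', hx,
    ← List.prod_take_mul_prod_drop (l.map f) c, List.drop_eq_getElem_cons hc',
    List.prod_cons, List.getElem_map]
  ac_rfl

theorem List.sum_range_getD_eq_sum_map {α M : Type*} [AddCommMonoid M] (f : α → M) (d : α)
    (l : List α) : ∑ i ∈ Finset.range l.length, f (l.getD i d) = (l.map f).sum := by
  induction l with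
  | nil => simp
  | cons a t ih =>
    simp only [List.length_cons, Finset.sum_range_succ', List.getD_cons_succ,
      List.getD_cons_zero, ih, List.map_cons, List.sum_cons]
    exact add_comm _ _

namespace Finset

variable {α : Type*} [DecidableEq α]

theorem mem_foldr_union {x : α} {l : List (Finset α)} :
    x ∈ l.foldr (· ∪ ·) ∅ ↔ ∃ b ∈ l, x ∈ b := by
  induction l with
  | nil => simp
  | cons a t ih => simp [ih]

theorem card_foldr_union_of_pairwise_disjoint {l : List (Finset α)}
    (h : l.Pairwise Disjoint) : (l.foldr (· ∪ ·) ∅).card = (l.map card).sum := by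
  induction l with
  | nil => simp
  | cons a t ih =>
    rw [List.pairwise_cons] at h
    have hdisj : Disjoint a (t.foldr (· ∪ ·) ∅) :=
      disjoint_left.mpr fun x hxa hxt ↦
        let ⟨b, hb, hxb⟩ := mem_foldr_union.mp hxt
        disjoint_left.mp (h.1 b hb) hxa hxb
    rw [List.foldr_cons, card_union_of_disjoint hdisj, ih h.2, List.map_cons, List.sum_cons]

end Finset

section PDPweight

variable {ηa ηb : ℝ}

theorem PDPweight_set_insert (n : ℕ) (l : List (Finset ℕ)) {c : ℕ} (hc : c < l.length) {x : ℕ}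
    (hx : x ∉ l[c]) (hcard : (l[c].card : ℝ) ≠ ηa) :
    PDPweight ηa ηb n (l.set c (insert x l[c])) = (l[c].card - ηa) * PDPweight ηa ηb n l := by
  have hΓ : Real.Gamma (((insert x l[c]).card : ℝ) - ηa)
      = (l[c].card - ηa) * Real.Gamma ((l[c].card : ℝ) - ηa) := by
    rw [Finset.card_insert_of_notMem hx, Nat.cast_succ, add_sub_right_comm,
      Real.Gamma_add_one (sub_ne_zero.mpr hcard)]
  unfold PDPweight
  rw [List.length_set, List.prod_map_set_of_eq_mul _ l hc (by rw [hΓ, mul_div_assoc])]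
  ring

theorem PDPweight_append_singleton (h0 : 0 < ηa) (h1 : ηa < 1) (hb : 0 < ηb) (n x : ℕ)
    (l : List (Finset ℕ)) :
    PDPweight ηa ηb n (l ++ [{x}]) = (ηb + l.length * ηa) * PDPweight ηa ηb n l := by
  have hΓ1 : Real.Gamma (1 - ηa) ≠ 0 := (Real.Gamma_pos_of_pos (by linarith)).ne'
  have hΓ : Real.Gamma (ηb / ηa + (l.length + 1 : ℕ))
      = (ηb / ηa + l.length) * Real.Gamma (ηb / ηa + l.length) := by
    rw [Nat.cast_succ, ← add_assoc, Real.Gamma_add_one (by positivity)]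
  unfold PDPweight
  rw [List.length_append, List.length_singleton, hΓ, List.map_append, List.prod_append]
  simp only [List.map_cons, List.map_nil, List.prod_cons, List.prod_nil,
    Finset.card_singleton, Nat.cast_one, div_self hΓ1, mul_one]
  field_simp
  ring

theorem sum_PDPweight_insert_add_PDPweight_append_singleton (h0 : 0 < ηa) (h1 : ηa < 1)
    (hb : 0 < ηb) (n x : ℕ) (l : List (Finset ℕ)) (hx : ∀ b ∈ l, x ∉ b)
    (hcard : ∀ b ∈ l, (b.card : ℝ) ≠ ηa) :
    ∑ c ∈ Finset.range l.length, PDPweight ηa ηb n (l.set c (insert x (l.getD c ∅)))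
        + PDPweight ηa ηb n (l ++ [{x}])
      = (ηb + (l.map Finset.card).sum) * PDPweight ηa ηb n l := by
  have hterm : ∀ c ∈ Finset.range l.length,
      PDPweight ηa ηb n (l.set c (insert x (l.getD c ∅)))
        = ((l.getD c ∅).card - ηa) * PDPweight ηa ηb n l := by
    intro c hc
    have hc : c < l.length := Finset.mem_range.mp hc
    rw [List.getD_eq_getElem l ∅ hc]
    exact PDPweight_set_insert n l hc (hx _ (l.getElem_mem hc)) (hcard _ (l.getElem_mem hc))
  rw [Finset.sum_congr rfl hterm, ← Finset.sum_mul, Finset.sum_sub_distrib,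
    List.sum_range_getD_eq_sum_map (fun b : Finset ℕ ↦ (b.card : ℝ)),
    PDPweight_append_singleton h0 h1 hb, Finset.sum_const, Finset.card_range, nsmul_eq_mul,
    Nat.cast_list_sum, List.map_map]
  simp only [Function.comp_def]
  ring

theorem mul_PDPweight_succ (n : ℕ) (l : List (Finset ℕ)) (h : ηb + n ≠ 0) :
    (ηb + n) * PDPweight ηa ηb (n + 1) l = PDPweight ηa ηb n l := by
  unfold PDPweight
  rw [Nat.cast_succ, ← add_assoc, Real.Gamma_add_one h]
  field_simp

end PDPweight

theorem PDP_addition_rule (ηa ηb : ℝ) (h0 : 0 < ηa) (h1 : ηa < 1) (hb : 0 < ηb)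
    (n : ℕ) (hn : 2 ≤ n) (blocks : List (Finset ℕ))
    (hne : ∀ b ∈ blocks, b.Nonempty)
    (hdisj : blocks.Pairwise (fun a b => Disjoint a b))
    (hunion : blocks.foldr (· ∪ ·) ∅ = Finset.Icc 1 (n-1)) :
    (∑ c ∈ Finset.range blocks.length,
        PDPweight ηa ηb n (blocks.set c (insert n (blocks.getD c ∅))))
      + PDPweight ηa ηb n (blocks ++ [{n}])
      = PDPweight ηa ηb (n-1) blocks := by
  obtain ⟨m, rfl⟩ : ∃ m, n = m + 1 := ⟨n - 1, by omega⟩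
  have hnew : ∀ b ∈ blocks, m + 1 ∉ b := fun b hb hmem ↦ by
    have := hunion ▸ Finset.mem_foldr_union.mpr ⟨b, hb, hmem⟩
    simp at this
  have hcard : ∀ b ∈ blocks, (b.card : ℝ) ≠ ηa := fun b hb ↦ by
    have : (1 : ℝ) ≤ b.card := by exact_mod_cast (hne b hb).card_pos
    linarith
  have htotal : (blocks.map Finset.card).sum = m := by
    rw [← Finset.card_foldr_union_of_pairwise_disjoint hdisj, hunion, Nat.card_Icc]
    omega
  rw [sum_PDPweight_insert_add_PDPweight_append_singleton h0 h1 hb _ _ blocks hnew hcard,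
    htotal, Nat.add_sub_cancel, mul_PDPweight_succ m blocks (by positivity)]
end

section
/- (Irreducibility of the adjacent-transposition chain on linear extensions.) Let h be a partial order on a finite set V and let l, l' ∈ L[h] be any two linear extensions of h. Then there is a finite sequence l = x_0, x_1, …, x_m = l' such that each x_t ∈ L[h] and each x_{t+1} is obtained from x_t by swapping two adjacent entries of the list x_t. -/
/-- `x'` is obtained from `x` by swapping two adjacent entries. -/
def AdjSwap {V : Type*} (x x' : List V) : Prop :=
  ∃ (u v : List V) (a b : V), x = u ++ a :: b :: v ∧ x' = u ++ b :: a :: v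


/-!
Call the adjacent swap `…, a, b, … ↦ …, b, a, …` admissible when `¬ r a b`; admissible swaps
preserve being a linear extension. To connect `l` to `l'`, bubble the head `v` of `l'` to the
front of `l`: every entry passed over comes after `v` in `l'`, hence is not `≻ v`, so each swap
is admissible. Then recurse on the tails, which are again permutations of each other.
-/

open Relation

theorem Relation.ReflTransGen.exists_seq {α : Type*} {R : α → α → Prop} {p : α → Prop}
    {a b : α} (h : ReflTransGen R a b) (ha : p a) (hR : ∀ x y, p x → R x y → p y) :
    ∃ (m : ℕ) (f : ℕ → α), f 0 = a ∧ f m = b ∧ (∀ t ≤ m, p (f t)) ∧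
      ∀ t < m, R (f t) (f (t + 1)) := by
  induction h with
  | refl =>
    exact ⟨0, fun _ => a, rfl, rfl, fun _ _ => ha, fun _ h => absurd h (Nat.not_lt_zero _)⟩
  | @tail b c _ hbc ih =>
    obtain ⟨m, f, hf0, hfm, hp, hR'⟩ := ih
    have hpb : p b := hfm ▸ hp m le_rfl
    refine ⟨m + 1, Function.update f (m + 1) c, by simp [hf0], by simp, fun t ht => ?_,
      fun t ht => ?_⟩
    · rcases Nat.lt_or_eq_of_le ht with ht | rfl
      · simpa [Function.update_of_ne ht.ne] using hp t (by omega)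
      · simpa using hR b c hpb hbc
    · rcases Nat.lt_or_eq_of_le (Nat.le_of_lt_succ ht) with ht | rfl
      · simpa [Function.update_of_ne (show t ≠ m + 1 by omega),
          Function.update_of_ne (show t + 1 ≠ m + 1 by omega)] using hR' t ht
      · simpa [hfm] using hbc

section AdmissibleSwap
variable {V : Type*} {r : V → V → Prop}

def AdmissibleSwap (r : V → V → Prop) (x y : List V) : Prop :=
  ∃ (u w : List V) (a b : V), x = u ++ a :: b :: w ∧ y = u ++ b :: a :: w ∧ ¬ r a b

theorem AdmissibleSwap.adjSwap {x y : List V} (h : AdmissibleSwap r x y) : AdjSwap x y :=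
  let ⟨u, w, a, b, hx, hy, _⟩ := h
  ⟨u, w, a, b, hx, hy⟩

theorem AdmissibleSwap.perm {x y : List V} (h : AdmissibleSwap r x y) : x.Perm y := by
  obtain ⟨u, w, a, b, rfl, rfl, -⟩ := h
  exact (List.Perm.swap b a w).append_left u

theorem AdmissibleSwap.cons {x y : List V} (h : AdmissibleSwap r x y) (v : V) :
    AdmissibleSwap r (v :: x) (v :: y) :=
  let ⟨u, w, a, b, hx, hy, hab⟩ := h
  ⟨v :: u, w, a, b, by simp [hx], by simp [hy], hab⟩

theorem AdmissibleSwap.pairwise {x y : List V} (h : AdmissibleSwap r x y)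
    (hx : x.Pairwise fun a b => ¬ r b a) : y.Pairwise fun a b => ¬ r b a := by
  obtain ⟨u, w, a, b, rfl, rfl, hab⟩ := h
  simp only [List.pairwise_append, List.pairwise_cons, List.mem_cons] at hx ⊢
  grind

theorem isLinext_iff {l : List V} :
    IsLinext r l ↔ l.Nodup ∧ (∀ v, v ∈ l) ∧ l.Pairwise fun a b => ¬ r b a := by
  rw [IsLinext, List.pairwise_iff_get]

theorem IsLinext.of_admissibleSwap {x y : List V} (hx : IsLinext r x)
    (h : AdmissibleSwap r x y) : IsLinext r y := by
  obtain ⟨hnd, hmem, hpw⟩ := isLinext_iff.mp hx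
  exact isLinext_iff.mpr ⟨h.perm.nodup_iff.mp hnd, fun v => h.perm.mem_iff.mp (hmem v),
    h.pairwise hpw⟩

theorem reflTransGen_admissibleSwap_cons {x y : List V}
    (h : ReflTransGen (AdmissibleSwap r) x y) (v : V) :
    ReflTransGen (AdmissibleSwap r) (v :: x) (v :: y) :=
  h.lift (v :: ·) fun _ _ hxy => hxy.cons v

theorem reflTransGen_admissibleSwap_to_front {v : V} {u : List V} (w : List V)
    (hu : ∀ x ∈ u, ¬ r x v) :
    ReflTransGen (AdmissibleSwap r) (u ++ v :: w) (v :: (u ++ w)) := by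
  induction u using List.reverseRecOn generalizing w with
  | nil => exact .refl
  | append_singleton u a ih =>
    have hswap : AdmissibleSwap r (u ++ [a] ++ v :: w) (u ++ v :: a :: w) :=
      ⟨u, w, a, v, by simp, rfl, hu a (by simp)⟩
    simpa using ReflTransGen.head hswap (ih (a :: w) fun x hx => hu x (by simp [hx]))

theorem reflTransGen_admissibleSwap_of_perm {l l' : List V} (hp : l.Perm l')
    (hl' : l'.Pairwise fun a b => ¬ r b a) : ReflTransGen (AdmissibleSwap r) l l' := by
  induction l' generalizing l with
  | nil => rw [List.perm_nil.mp hp]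
  | cons v t ih =>
    obtain ⟨u, w, rfl, hvu⟩ := List.eq_append_cons_of_mem (hp.mem_iff.mpr List.mem_cons_self)
    have hperm : (u ++ w).Perm t := (List.perm_middle.symm.trans hp).cons_inv
    rw [List.pairwise_cons] at hl'
    have hu : ∀ x ∈ u, ¬ r x v := fun x hx => hl'.1 x <|
      (List.mem_cons.mp (hp.mem_iff.mp (by simp [hx]))).resolve_left
        (ne_of_mem_of_not_mem hx hvu)
    exact (reflTransGen_admissibleSwap_to_front w hu).trans
      (reflTransGen_admissibleSwap_cons (ih hperm hl'.2) v)

end AdmissibleSwap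

theorem adjacent_swap_chain_irreducible_general {V : Type*}
    (r : V → V → Prop)
    (l l' : List V) (hl : IsLinext r l) (hl' : IsLinext r l') :
    ∃ (m : ℕ) (x : ℕ → List V), x 0 = l ∧ x m = l' ∧
      (∀ t ≤ m, IsLinext r (x t)) ∧
      (∀ t < m, AdjSwap (x t) (x (t+1))) := by
  obtain ⟨hnd, hmem, -⟩ := isLinext_iff.mp hl
  obtain ⟨hnd', hmem', hpw'⟩ := isLinext_iff.mp hl'
  have hp : l.Perm l' :=
    (List.perm_ext_iff_of_nodup hnd hnd').mpr fun v => by simp [hmem, hmem']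
  obtain ⟨m, x, hx0, hxm, hlin, hswap⟩ :=
    (reflTransGen_admissibleSwap_of_perm hp hpw').exists_seq hl
      fun _ _ hx hxy => hx.of_admissibleSwap hxy
  exact ⟨m, x, hx0, hxm, hlin, fun t ht => (hswap t ht).adjSwap⟩

theorem adjacent_swap_chain_irreducible {V : Type*} [Fintype V]
    (r : V → V → Prop) (hr : IsPartialOrderOn r)
    (l l' : List V) (hl : IsLinext r l) (hl' : IsLinext r l') :
    ∃ (m : ℕ) (x : ℕ → List V), x 0 = l ∧ x m = l' ∧
      (∀ t ≤ m, IsLinext r (x t)) ∧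
      (∀ t < m, AdjSwap (x t) (x (t+1))) :=
  adjacent_swap_chain_irreducible_general r l l' hl hl'
end

section
/- (Convergence of the adjacent-transposition Markov chain to the uniform distribution on linear extensions.) Let h be a partial order on a finite set V with |V| = n, and define the transition matrix P on the finite state space L[h] as follows: from state x, an index i is chosen uniformly from {1,…,n}; if i = n the chain stays at x; otherwise the entries in positions i and i+1 of x are swapped to form x', and the chain moves to x' if x' ∈ L[h] and stays at x otherwise. (So P_{x,x'} = (1/n)·|{i ∈ {1,…,n−1} : swapping positions i, i+1 of x gives x'}| for x' ≠ x, and P_{x,x} = 1 − ∑_{x' ≠ x} P_{x,x'}.) Then for all x, l ∈ L[h], the t-step transition probability (P^t)_{x,l} converges to 1/|L[h]| as t → ∞; i.e., the chain converges in distribution to the uniform distribution over L[h] from every starting state. -/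
open Classical Filter

/-- A linear extension of `r`, encoded as an enumeration `σ : Fin n ≃ V` of `V`
(the list `(σ 0, …, σ (n-1))`): for positions `a < b` it is not the case that
the entry at `b` beats the entry at `a`. -/
def IsLinextEnum {V : Type*} {n : ℕ} (r : V → V → Prop) (σ : Fin n ≃ V) : Prop :=
  ∀ a b : Fin n, a < b → ¬ r (σ b) (σ a)

/-- Off-diagonal transition probability of the adjacent-transposition chain:
`(1/n)` times the number of positions `i ∈ {1,…,n−1}` such that swapping the entries
at positions `i`, `i+1` of `x` yields `y`. -/
noncomputable def offDiagProb {V : Type*} [Fintype V] {n : ℕ} (r : V → V → Prop)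
    (x y : {σ : Fin n ≃ V // IsLinextEnum r σ}) : ℝ :=
  (1 / (n : ℝ)) * ((Finset.univ.filter (fun i : Fin n =>
    ∃ h : (i : ℕ) + 1 < n,
      (y : Fin n ≃ V) = (Equiv.swap i ⟨(i : ℕ) + 1, h⟩).trans (x : Fin n ≃ V))).card : ℝ)

/-- The transition matrix `P` on the state space `L[h]`: from `x`, a position
`i ∈ {1,…,n}` is chosen uniformly; if `i = n` the chain stays put, otherwise the
entries at positions `i, i+1` are swapped and the move is accepted iff the result is
again a linear extension.  Off the diagonal `P_{x,y} = offDiagProb r x y`; on the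
diagonal `P_{x,x} = 1 − ∑_{y ≠ x} P_{x,y}`. -/
noncomputable def transMatrix {V : Type*} [Fintype V] {n : ℕ} (r : V → V → Prop) :
    Matrix {σ : Fin n ≃ V // IsLinextEnum r σ} {σ : Fin n ≃ V // IsLinextEnum r σ} ℝ :=
  fun x y =>
    if x = y then 1 - ∑ z ∈ Finset.univ.erase x, offDiagProb r x z
    else offDiagProb r x y

/-!
A move and its reverse swap the same two positions, so `P` is symmetric; its rows sum to `1`, so
it is doubly stochastic, and `P x x > 0` because the last position is never swapped. Two linear
extensions `x ≠ y` are joined by accepted moves: at an adjacent descent `i` of `π = y⁻¹ ∘ x` the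
entries `x i, x (i+1)` appear in the opposite order in `y`, so swapping them yields a linear
extension again, and it increases `∑ a, a * π a`. Connectivity and a positive diagonal make `P`
primitive: all entries of some `P ^ k` are at least some `ε > 0`. Then `P ^ k` contracts vectors
with zero sum by the factor `1 - |L[h]| ε` in the sup norm, and applying this to
`P ^ t (e_l - 1/|L[h]|)` gives the convergence.
-/

open Finset Relation

namespace Relation

variable {α β : Type*} [Finite α] [Preorder β] {R : α → α → Prop}

lemma reflTransGen_of_forall_ne_exists_lt (Φ : α → β) {y : α}
    (h : ∀ x ≠ y, ∃ x', R x x' ∧ Φ x < Φ x') (x : α) : ReflTransGen R x y := by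
  have wf : WellFounded fun a b : α => Φ b < Φ a :=
    @Finite.wellFounded_of_trans_of_irrefl _ _ _ ⟨fun _ _ _ h₁ h₂ => h₂.trans h₁⟩
      ⟨fun _ => lt_irrefl _⟩
  induction x using wf.induction with
  | _ x ih =>
    obtain rfl | hx := eq_or_ne x y
    · exact .refl
    · obtain ⟨x', hxx', hlt⟩ := h x hx
      exact .head hxx' (ih x' hlt)

end Relation

namespace Matrix

section Primitive

variable {ι R : Type*} [Fintype ι] [DecidableEq ι] [Ring R] [LinearOrder R]
  [IsStrictOrderedRing R] {A : Matrix ι ι R}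

lemma pow_succ_apply_pos (hA : ∀ i j, 0 ≤ A i j) {m : ℕ} {i j k : ι}
    (hij : 0 < (A ^ m) i j) (hjk : 0 < A j k) : 0 < (A ^ (m + 1)) i k := by
  rw [pow_succ, mul_apply]
  exact sum_pos' (fun l _ => mul_nonneg (pow_apply_nonneg hA m i l) (hA l k))
    ⟨j, mem_univ _, mul_pos hij hjk⟩

lemma eventually_pow_apply_pos (hA : ∀ i j, 0 ≤ A i j) (hdiag : ∀ i, 0 < A i i) {i j : ι}
    (h : ReflTransGen (fun a b => 0 < A a b) i j) : ∀ᶠ m in atTop, 0 < (A ^ m) i j := by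
  induction h with
  | refl =>
    refine .of_forall fun m => ?_
    induction m with
    | zero => simp
    | succ m ih => exact pow_succ_apply_pos hA ih (hdiag i)
  | tail _ hbc ih =>
    obtain ⟨k, hk⟩ := eventually_atTop.1 ih
    refine eventually_atTop.2 ⟨k + 1, fun m hm => ?_⟩
    obtain ⟨m, rfl⟩ : ∃ m', m = m' + 1 := ⟨m - 1, by omega⟩
    exact pow_succ_apply_pos hA (hk m (by omega)) hbc

lemma isPrimitive_of_reflTransGen (hA : ∀ i j, 0 ≤ A i j) (hdiag : ∀ i, 0 < A i i)
    (h : ∀ i j, ReflTransGen (fun a b => 0 < A a b) i j) : A.IsPrimitive :=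
  ⟨hA, ((eventually_gt_atTop 0).and (eventually_all.2 fun i => eventually_all.2 fun j =>
    eventually_pow_apply_pos hA hdiag (h i j))).exists⟩

end Primitive

section Stochastic

variable {ι : Type*} [Fintype ι] [DecidableEq ι] {M : Matrix ι ι ℝ}

lemma norm_mulVec_le_of_sum_eq_zero (hM : M ∈ rowStochastic ℝ ι) {ε : ℝ}
    (hε : ∀ i j, ε ≤ M i j) {v : ι → ℝ} (hv : ∑ i, v i = 0) :
    ‖M *ᵥ v‖ ≤ (1 - Fintype.card ι * ε) * ‖v‖ := by
  have hrow : ∀ i, ∑ j, (M i j - ε) = 1 - Fintype.card ι * ε := fun i => by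
    rw [sum_sub_distrib, sum_row_of_mem_rowStochastic hM, sum_const, card_univ, nsmul_eq_mul]
  have hentry : ∀ i, ‖(M *ᵥ v) i‖ ≤ (1 - Fintype.card ι * ε) * ‖v‖ := fun i => calc
    ‖(M *ᵥ v) i‖ = ‖∑ j, (M i j - ε) * v j‖ := by
      simp only [sub_mul, sum_sub_distrib, ← mul_sum, hv, mul_zero, sub_zero, mulVec,
        dotProduct]
    _ ≤ ∑ j, (M i j - ε) * ‖v‖ := by
      refine (norm_sum_le _ _).trans (sum_le_sum fun j _ => ?_)
      rw [norm_mul, Real.norm_of_nonneg (sub_nonneg.2 (hε i j))]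
      exact mul_le_mul_of_nonneg_left (norm_le_pi_norm v j) (sub_nonneg.2 (hε i j))
    _ = (1 - Fintype.card ι * ε) * ‖v‖ := by rw [← sum_mul, hrow i]
  rcases isEmpty_or_nonempty ι with hι | ⟨⟨i⟩⟩
  · simp [Subsingleton.elim (M *ᵥ v) 0]
  · exact (pi_norm_le_iff_of_nonneg ((norm_nonneg _).trans (hentry i))).2 hentry

lemma norm_pow_mulVec_le_of_sum_eq_zero (hM : M ∈ doublyStochastic ℝ ι) {k : ℕ} {ε : ℝ}
    (hε : ∀ i j, ε ≤ (M ^ k) i j) (hc : 0 ≤ 1 - Fintype.card ι * ε) {v : ι → ℝ}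
    (hv : ∑ i, v i = 0) (t : ℕ) :
    ‖(M ^ t) *ᵥ v‖ ≤ (1 - Fintype.card ι * ε) ^ (t / k) * ‖v‖ := by
  have hrow : ∀ s, M ^ s ∈ rowStochastic ℝ ι := fun s =>
    (mem_doublyStochastic_iff_mem_rowStochastic_and_mem_colStochastic.1 (pow_mem hM s)).1
  have hsum : ∀ s, ∑ i, ((M ^ s) *ᵥ v) i = 0 := fun s =>
    (sum_mulVec_of_mem_doublyStochastic (pow_mem hM s)).trans hv
  have hblocks : ∀ q, ‖(M ^ (k * q)) *ᵥ v‖ ≤ (1 - Fintype.card ι * ε) ^ q * ‖v‖ := by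
    intro q
    induction q with
    | zero => simp
    | succ q ih =>
      rw [mul_add_one, add_comm, pow_add, ← mulVec_mulVec, pow_succ', mul_assoc]
      exact (norm_mulVec_le_of_sum_eq_zero (hrow k) hε (hsum _)).trans
        (mul_le_mul_of_nonneg_left ih hc)
  have hrest := norm_mulVec_le_of_sum_eq_zero (hrow (t % k)) (ε := 0)
    (fun i j => nonneg_of_mem_rowStochastic (hrow _)) (hsum (k * (t / k)))
  rw [mul_zero, sub_zero, one_mul, mulVec_mulVec, ← pow_add, Nat.mod_add_div] at hrest
  exact hrest.trans (hblocks _)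

theorem tendsto_pow_apply_of_isPrimitive (hM : M ∈ doublyStochastic ℝ ι)
    (hprim : M.IsPrimitive) (i j : ι) :
    Tendsto (fun t => (M ^ t) i j) atTop (nhds (1 / (Fintype.card ι : ℝ))) := by
  obtain ⟨-, k, hk, hpos⟩ := hprim
  have : Nonempty ι := ⟨i⟩
  obtain ⟨⟨a, b⟩, hmin⟩ := Finite.exists_min fun p : ι × ι => (M ^ k) p.1 p.2
  set c := 1 - Fintype.card ι * (M ^ k) a b
  have hN : (0 : ℝ) < Fintype.card ι := by exact_mod_cast Fintype.card_pos
  have hc0 : 0 ≤ c := by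
    have := sum_le_sum fun b' (_ : b' ∈ univ) => hmin (a, b')
    rw [sum_row_of_mem_doublyStochastic (pow_mem hM k), sum_const, card_univ, nsmul_eq_mul]
      at this
    exact sub_nonneg.2 this
  have hc1 : c < 1 := sub_lt_self _ (mul_pos hN (hpos a b))
  set v : ι → ℝ := (Pi.single j 1 : ι → ℝ) - fun _ => 1 / (Fintype.card ι : ℝ)
  have hv : ∑ i, v i = 0 := by
    simp [v, sum_sub_distrib, hN.ne']
  have hvt : ∀ t, ((M ^ t) *ᵥ v) i = (M ^ t) i j - 1 / (Fintype.card ι : ℝ) := fun t => by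
    simp [v, mulVec, dotProduct, mul_sub, sum_sub_distrib, ← sum_mul, Pi.single_apply,
      sum_row_of_mem_doublyStochastic (pow_mem hM t)]
  have hlim : Tendsto (fun t => c ^ (t / k) * ‖v‖) atTop (nhds 0) := by
    simpa using ((tendsto_pow_atTop_nhds_zero_of_lt_one hc0 hc1).comp
      (Nat.tendsto_div_const_atTop hk.ne')).mul_const ‖v‖
  rw [tendsto_iff_norm_sub_tendsto_zero]
  refine squeeze_zero (fun _ => norm_nonneg _) (fun t => ?_) hlim
  rw [← hvt]
  exact (norm_le_pi_norm _ i).trans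
    (norm_pow_mulVec_le_of_sum_eq_zero hM (fun a' b' => hmin (a', b')) hc0 hv t)

end Stochastic

end Matrix

lemma Fin.swap_lt_swap_of_ne {n : ℕ} {i j a b : Fin n} (hj : (j : ℕ) = i + 1) (hab : a < b)
    (hne : ¬(a = i ∧ b = j)) : Equiv.swap i j a < Equiv.swap i j b := by
  simp only [Equiv.swap_apply_def]
  split_ifs <;> simp only [Fin.lt_def, Fin.ext_iff] at * <;> omega

namespace Equiv.Perm

variable {n : ℕ}

lemma exists_adjacent_descent_of_ne_one {π : Perm (Fin n)} (hπ : π ≠ 1) :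
    ∃ (i : Fin n) (hi : (i : ℕ) + 1 < n), π ⟨i + 1, hi⟩ < π i := by
  by_contra! hasc
  apply hπ
  cases n with
  | zero => exact Equiv.ext fun a => a.elim0
  | succ m =>
    have hmono : StrictMono π := Fin.strictMono_iff_lt_succ.2 fun i =>
      (hasc i.castSucc (by simp)).lt_of_ne (π.injective.ne (by simp [Fin.ext_iff]))
    exact Equiv.ext (congrFun hmono.eq_id)

def weightedSum (π : Perm (Fin n)) : ℤ :=
  ∑ a : Fin n, ((a : ℕ) : ℤ) * ((π a : ℕ) : ℤ)

lemma weightedSum_lt_mul_swap {π : Perm (Fin n)} {i j : Fin n} (hj : (j : ℕ) = i + 1)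
    (h : π j < π i) : weightedSum π < weightedSum (π * swap i j) := by
  have hij : i ≠ j := fun h => by simp [h] at hj
  have hdiff : weightedSum (π * swap i j) - weightedSum π = π i - π j := by
    rw [weightedSum, weightedSum, ← sum_sub_distrib, Fintype.sum_eq_add i j hij]
    · simp [swap_apply_left, swap_apply_right, hj]
      ring
    · rintro a ⟨hai, haj⟩
      simp [swap_apply_of_ne_of_ne hai haj]
  have : ((π j : ℕ) : ℤ) < π i := by exact_mod_cast h
  linarith

end Equiv.Perm

lemma IsLinextEnum.swap_trans {V : Type*} {n : ℕ} {r : V → V → Prop} {σ : Fin n ≃ V}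
    (hσ : IsLinextEnum r σ) {i : Fin n} (hi : (i : ℕ) + 1 < n)
    (h : ¬ r (σ i) (σ ⟨i + 1, hi⟩)) : IsLinextEnum r ((Equiv.swap i ⟨i + 1, hi⟩).trans σ) := by
  intro a b hab
  by_cases hadj : a = i ∧ b = ⟨i + 1, hi⟩
  · obtain ⟨rfl, rfl⟩ := hadj
    simpa [Equiv.swap_apply_left, Equiv.swap_apply_right] using h
  · exact hσ _ _ (Fin.swap_lt_swap_of_ne rfl hab hadj)

section AdjacentSwapChain

open Matrix

variable {V : Type*} [Fintype V] {n : ℕ} {r : V → V → Prop}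

local notation "L" => {σ : Fin n ≃ V // IsLinextEnum r σ}

lemma offDiagProb_nonneg (x y : L) : 0 ≤ offDiagProb r x y := by
  unfold offDiagProb
  positivity

lemma offDiagProb_comm (x y : L) : offDiagProb r x y = offDiagProb r y x := by
  unfold offDiagProb
  congr 3
  ext i
  simp only [mem_filter, mem_univ, true_and]
  refine exists_congr fun hi => ⟨fun h => ?_, fun h => ?_⟩ <;>
    rw [h, ← Equiv.trans_assoc, Equiv.swap_swap, Equiv.refl_trans]

lemma sum_offDiagProb_lt_one (x : L) : ∑ z ∈ univ.erase x, offDiagProb r x z < 1 := by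
  rcases Nat.eq_zero_or_pos n with rfl | hn
  · simp [offDiagProb]
  set A : L → Finset (Fin n) := fun z => univ.filter fun i : Fin n =>
    ∃ h : (i : ℕ) + 1 < n, (z : Fin n ≃ V) = (Equiv.swap i ⟨(i : ℕ) + 1, h⟩).trans x
  have hdisj : ((univ.erase x : Finset L) : Set L).PairwiseDisjoint A := by
    intro z _ w _ hzw
    refine disjoint_left.2 fun i hiz hiw => hzw (Subtype.ext ?_)
    obtain ⟨_, hz⟩ := (mem_filter.1 hiz).2
    obtain ⟨_, hw⟩ := (mem_filter.1 hiw).2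
    exact hz.trans hw.symm
  have hlast : (⟨n - 1, by omega⟩ : Fin n) ∉ (univ.erase x).biUnion A := by
    simp only [A, mem_biUnion, mem_filter]
    rintro ⟨_, _, _, h, _⟩
    omega
  have hcard : ((univ.erase x).biUnion A).card < n := by
    have hss : (univ.erase x).biUnion A ⊂ univ :=
      ssubset_univ_iff.2 fun h => hlast (by rw [h]; exact mem_univ _)
    simpa using card_lt_card hss
  calc ∑ z ∈ univ.erase x, offDiagProb r x z
      = ((univ.erase x).biUnion A).card / (n : ℝ) := by
        rw [card_biUnion hdisj, Nat.cast_sum, sum_div]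
        simp [offDiagProb, A, div_eq_inv_mul]
    _ < 1 := (div_lt_one (by positivity)).2 (by exact_mod_cast hcard)

lemma transMatrix_apply_of_ne {x y : L} (h : x ≠ y) : transMatrix r x y = offDiagProb r x y :=
  if_neg h

lemma transMatrix_apply_self_pos (x : L) : 0 < transMatrix r x x := by
  rw [transMatrix, if_pos rfl]
  exact sub_pos.2 (sum_offDiagProb_lt_one x)

lemma transMatrix_nonneg (x y : L) : 0 ≤ transMatrix r x y := by
  obtain rfl | h := eq_or_ne x y
  · exact (transMatrix_apply_self_pos x).le
  · exact (transMatrix_apply_of_ne h).symm ▸ offDiagProb_nonneg x y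

lemma transMatrix_transpose : (transMatrix r)ᵀ = transMatrix (n := n) r := by
  ext x y
  obtain rfl | h := eq_or_ne x y
  · rfl
  · rw [transpose_apply, transMatrix_apply_of_ne h, transMatrix_apply_of_ne h.symm,
      offDiagProb_comm]

lemma transMatrix_mem_doublyStochastic : transMatrix r ∈ doublyStochastic ℝ L := by
  have hrow : transMatrix r ∈ rowStochastic ℝ L := by
    refine mem_rowStochastic_iff_sum.2 ⟨transMatrix_nonneg, fun x => ?_⟩
    rw [← add_sum_erase _ _ (mem_univ x),
      sum_congr rfl fun y hy => transMatrix_apply_of_ne (ne_of_mem_erase hy).symm,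
      transMatrix, if_pos rfl, sub_add_cancel]
  rw [mem_doublyStochastic_iff_mem_rowStochastic_and_mem_colStochastic,
    ← transpose_mem_rowStochastic_iff_mem_colStochastic, transMatrix_transpose]
  exact ⟨hrow, hrow⟩

lemma transMatrix_pos_of_eq_swap_trans {x y : L} {i : Fin n} (hi : (i : ℕ) + 1 < n)
    (hy : (y : Fin n ≃ V) = (Equiv.swap i ⟨i + 1, hi⟩).trans x) : 0 < transMatrix r x y := by
  have hne : x ≠ y := by
    rintro rfl
    have := congrArg (fun σ : Fin n ≃ V => σ i) hy
    simp [Equiv.swap_apply_left, Fin.ext_iff] at this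
  rw [transMatrix_apply_of_ne hne, offDiagProb]
  have hpos : 0 < (univ.filter fun i' : Fin n => ∃ h : (i' : ℕ) + 1 < n,
      (y : Fin n ≃ V) = (Equiv.swap i' ⟨(i' : ℕ) + 1, h⟩).trans x).card :=
    card_pos.2 ⟨i, mem_filter.2 ⟨mem_univ _, hi, hy⟩⟩
  have : (0 : ℝ) < n := by exact_mod_cast (show 0 < n by omega)
  positivity

lemma reflTransGen_transMatrix_pos (x y : L) :
    ReflTransGen (fun a b => 0 < transMatrix r a b) x y := by
  refine reflTransGen_of_forall_ne_exists_lt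
    (fun z : L => Equiv.Perm.weightedSum (z.1.trans y.1.symm)) (fun x hxy => ?_) x
  set π : Equiv.Perm (Fin n) := x.1.trans y.1.symm
  have hπ : π ≠ 1 := fun h => hxy (Subtype.ext (Equiv.ext fun a => by
    simpa [π, Equiv.symm_apply_eq] using congrArg (· a) h))
  obtain ⟨i, hi, hdesc⟩ := Equiv.Perm.exists_adjacent_descent_of_ne_one hπ
  have hnr : ¬ r (x.1 i) (x.1 ⟨i + 1, hi⟩) := by
    simpa [π] using y.2 _ _ hdesc
  exact ⟨⟨_, x.2.swap_trans hi hnr⟩, transMatrix_pos_of_eq_swap_trans hi rfl,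
    Equiv.Perm.weightedSum_lt_mul_swap rfl hdesc⟩

lemma transMatrix_isPrimitive : (transMatrix (n := n) r).IsPrimitive :=
  isPrimitive_of_reflTransGen transMatrix_nonneg transMatrix_apply_self_pos
    reflTransGen_transMatrix_pos

end AdjacentSwapChain

theorem adjacent_swap_chain_converges_to_uniform_general {V : Type*} [Fintype V] (n : ℕ)
    (r : V → V → Prop)
    (x l : {σ : Fin n ≃ V // IsLinextEnum r σ}) :
    Tendsto (fun t : ℕ => ((transMatrix r) ^ t) x l) atTop
      (nhds (1 / (Fintype.card {σ : Fin n ≃ V // IsLinextEnum r σ} : ℝ))) :=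
  Matrix.tendsto_pow_apply_of_isPrimitive transMatrix_mem_doublyStochastic
    transMatrix_isPrimitive x l

theorem adjacent_swap_chain_converges_to_uniform {V : Type*} [Fintype V] (n : ℕ)
    (hcard : Fintype.card V = n)
    (r : V → V → Prop) (hr : IsPartialOrderOn r)
    (x l : {σ : Fin n ≃ V // IsLinextEnum r σ}) :
    Tendsto (fun t : ℕ => ((transMatrix r) ^ t) x l) atTop
      (nhds (1 / (Fintype.card {σ : Fin n ≃ V // IsLinextEnum r σ} : ℝ))) :=
  adjacent_swap_chain_converges_to_uniform_general n r x l
end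

section
/- (Pair-coverage characterizes identifiability from suborders.) Let n ≥ 1 and let o_1, …, o_m be subsets of [n] = {1,…,n}. The following are equivalent: (i) for every pair of distinct i, j ∈ [n] there exists k ∈ {1,…,m} with {i, j} ⊆ o_k; (ii) for all partial orders h, h' on [n], if the suborders satisfy h[o_k] = h'[o_k] for every k ∈ {1,…,m}, then h = h'. -/
/- **Statement 15.** Pair-coverage characterizes identifiability from suborders: the
groups `o_1,…,o_m ⊆ [n]` cover every pair of distinct actors iff any two partial orders
on `[n]` agreeing on every suborder `h[o_k]` are equal. -/
theorem pair_coverage_iff_identifiable (n m : ℕ) (hn : 1 ≤ n)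
    (o : Fin m → Set (Fin n)) :
    (∀ i j : Fin n, i ≠ j → ∃ k : Fin m, i ∈ o k ∧ j ∈ o k) ↔
    (∀ r r' : Fin n → Fin n → Prop, IsPartialOrderOn r → IsPartialOrderOn r' →
      (∀ k : Fin m, ∀ i ∈ o k, ∀ j ∈ o k, (r i j ↔ r' i j)) → r = r') := by
  constructor
  · intro hcov r r' hr hr' hagree
    funext i j
    by_cases hij : i = j
    · subst hij
      simp only [eq_iff_iff]
      exact ⟨fun h => absurd h (hr.1 i), fun h => absurd h (hr'.1 i)⟩
    · obtain ⟨k, hik, hjk⟩ := hcov i j hij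
      exact propext (hagree k i hik j hjk)
  · intro hid i j hij
    by_contra hnc
    push_neg at hnc
    set r : Fin n → Fin n → Prop := fun _ _ => False with hrdef
    set r' : Fin n → Fin n → Prop := fun a b => a = i ∧ b = j with hr'def
    have hr : IsPartialOrderOn r := ⟨fun _ h => h, fun _ _ _ h => h.elim⟩
    have hr' : IsPartialOrderOn r' := by
      constructor
      · rintro a ⟨h1, h2⟩; exact hij (h1 ▸ h2)
      · rintro a b c ⟨_, hb⟩ ⟨hb', _⟩; exact (hij (hb'.symm.trans hb)).elim
    have hagree : ∀ k : Fin m, ∀ a ∈ o k, ∀ b ∈ o k, (r a b ↔ r' a b) := by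
      intro k a ha b hb
      constructor
      · intro h; exact h.elim
      · rintro ⟨rfl, rfl⟩; exact (hnc k ha hb).elim
    have heq := hid r r' hr hr' hagree
    have : r i j = r' i j := by rw [heq]
    simp [hrdef, hr'def] at this
end

section
/- (Posterior consistency for the noise-free partial order model with a fully supported prior.) Let h† be a partial order on [n] = {1,…,n}, and let o_1, …, o_m ⊆ [n] each have at least 2 elements and be such that every pair of distinct i, j ∈ [n] lies in some o_k. Let π be a probability distribution on the finite set H_{[n]} of partial orders on [n] with π(h) > 0 for every h. For each k ∈ {1,…,m} let (Y_{k,j})_{j≥1} be jointly independent random lists with each Y_{k,j} uniformly distributed on L[h†[o_k]], and for N ≥ 1 define the posterior π_N(h) = π(h) ∏_{k=1}^m ∏_{j=1}^N (1_{Y_{k,j} ∈ L[h[o_k]]}/|L[h[o_k]]|) / ∑_{h' ∈ H_{[n]}} π(h') ∏_{k=1}^m ∏_{j=1}^N (1_{Y_{k,j} ∈ L[h'[o_k]]}/|L[h'[o_k]]|). Then π_N(h†) → 1 almost surely as N → ∞. -/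
open MeasureTheory ProbabilityTheory Filter

/-- A Boolean-encoded relation on `Fin n`, viewed as a `Prop`-valued relation
(so that relations on `[n]` form a finite type). -/
def relOf {n : ℕ} (r : Fin n → Fin n → Bool) : Fin n → Fin n → Prop :=
  fun i j => r i j = true

/-! Almost surely every observed list `Y_{k,j}` lies in `L[h†[o_k]]`, and for every partial order `h`
and group `o_k` with `L[h†[o_k]] ⊄ L[h[o_k]]` some observed list lies outside `L[h[o_k]]`, which
makes the likelihood of `h` vanish from then on. If instead `L[h†[o_k]] ⊆ L[h[o_k]]` for all `k`,
then `h ⊆ h†` on every pair inside a group; as the groups cover all pairs, `h ≠ h†` forces one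
inclusion to be strict, and the likelihood ratio of `h` to `h†` is
`(∏_k |L[h†[o_k]]| / |L[h[o_k]]|) ^ N → 0`. -/

open scoped Topology ENNReal

section LinearExtensions

variable {V : Type*}

def linexts (r : V → V → Prop) (o : Set V) : Set (List V) := {l | IsLinextOn r o l}

@[simp]
theorem mem_linexts {r : V → V → Prop} {o : Set V} {l : List V} :
    l ∈ linexts r o ↔ IsLinextOn r o l :=
  Iff.rfl

theorem IsPartialOrderOn.exists_isLinextOn {r : V → V → Prop} (hr : IsPartialOrderOn r)
    {o : Set V} (ho : o.Finite) : ∃ l, IsLinextOn r o l := by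
  classical
  obtain ⟨hirr, htrans⟩ := hr
  have : IsPartialOrder V (Relation.ReflGen r) :=
    { refl := fun _ => .refl
      trans := fun _ _ _ hab hbc => by
        rcases hab with _ | hab
        · exact hbc
        rcases hbc with _ | hbc
        · exact .single hab
        · exact .single (htrans _ _ _ hab hbc)
      antisymm := fun a b hab hba => by
        rcases hab with _ | hab
        · rfl
        rcases hba with _ | hba
        · rfl
        · exact absurd (htrans _ _ _ hab hba) (hirr a) }
  obtain ⟨s, hs, hrs⟩ := extend_partialOrder (Relation.ReflGen r)
  have := hs
  refine ⟨ho.toFinset.sort s, ho.toFinset.sort_nodup s, fun v => by simp, fun a b hab hba => ?_⟩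
  have hsorted := (ho.toFinset.pairwise_sort s).rel_get_of_lt hab
  rw [antisymm (hrs _ _ (.single hba)) hsorted] at hba
  exact hirr _ hba

theorem IsLinextOn.lt_of_rel {r : V → V → Prop} {o : Set V} {l : List V} (hl : IsLinextOn r o l)
    {a b : Fin l.length} (hab : a ≠ b) (hr : r (l.get a) (l.get b)) : a < b :=
  (lt_or_gt_of_ne hab).resolve_right fun hba => hl.2.2 b a hba hr

theorem IsLinextOn.anti {r s : V → V → Prop} {o : Set V} {l : List V} (hrs : r ≤ s)
    (hl : IsLinextOn s o l) : IsLinextOn r o l :=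
  ⟨hl.1, hl.2.1, fun a b hab hr => hl.2.2 a b hab (hrs _ _ hr)⟩

theorem IsPartialOrderOn.adjoin {r : V → V → Prop} (hr : IsPartialOrderOn r)
    {i j : V} (hij : i ≠ j) (hrij : ¬ r i j) :
    IsPartialOrderOn fun a b => r a b ∨ (Relation.ReflGen r a j ∧ Relation.ReflGen r i b) := by
  obtain ⟨hirr, htrans⟩ := hr
  have trans_l : ∀ {a b c}, Relation.ReflGen r a b → r b c → r a c := by
    rintro a b c (_ | hab) hbc
    exacts [hbc, htrans _ _ _ hab hbc]
  have trans_r : ∀ {a b c}, r a b → Relation.ReflGen r b c → r a c := by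
    rintro a b c hab (_ | hbc)
    exacts [hab, htrans _ _ _ hab hbc]
  constructor
  · rintro a (ha | ⟨_ | haj, _ | hia⟩)
    · exact hirr a ha
    · exact hij rfl
    · exact hrij hia
    · exact hrij haj
    · exact hrij (htrans _ _ _ hia haj)
  · rintro a b c (hab | ⟨haj, hib⟩) (hbc | ⟨hbj, hic⟩)
    · exact .inl (htrans _ _ _ hab hbc)
    · exact .inr ⟨.single (trans_r hab hbj), hic⟩
    · exact .inr ⟨haj, .single (trans_l hib hbc)⟩
    · exfalso
      rcases hib with _ | hib
      · rcases hbj with _ | hbj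
        exacts [hij rfl, hrij hbj]
      · exact hrij (trans_r hib hbj)

theorem IsPartialOrderOn.exists_isLinextOn_get_lt {r : V → V → Prop} (hr : IsPartialOrderOn r)
    {o : Set V} (ho : o.Finite) {i j : V} (hi : i ∈ o) (hj : j ∈ o) (hij : i ≠ j) (hrij : ¬ r i j) :
    ∃ l, IsLinextOn r o l ∧ ∃ a b : Fin l.length, a < b ∧ l.get a = j ∧ l.get b = i := by
  -- a linear extension of `r` enlarged by `j ≺ i` (and what transitivity then forces)
  obtain ⟨l, hl⟩ := (hr.adjoin hij hrij).exists_isLinextOn ho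
  obtain ⟨a, rfl⟩ := List.mem_iff_get.1 ((hl.2.1 j).2 hj)
  obtain ⟨b, rfl⟩ := List.mem_iff_get.1 ((hl.2.1 _).2 hi)
  exact ⟨l, hl.anti fun _ _ => .inl, a, b,
    hl.lt_of_rel (fun hab => hij (hab ▸ rfl)) (.inr ⟨.refl, .refl⟩), rfl, rfl⟩

theorem linexts_subset_linexts_iff {r s : V → V → Prop} (hr : IsPartialOrderOn r) {o : Set V}
    (ho : o.Finite) :
    linexts r o ⊆ linexts s o ↔ ∀ i ∈ o, ∀ j ∈ o, i ≠ j → s i j → r i j := by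
  constructor
  · intro hsub i hi j hj hij hsij
    by_contra hrij
    obtain ⟨l, hl, a, b, hab, rfl, rfl⟩ := hr.exists_isLinextOn_get_lt ho hi hj hij hrij
    exact (hsub hl).2.2 a b hab hsij
  · intro hsr l ⟨hnd, hmem, hord⟩
    refine ⟨hnd, hmem, fun a b hab hs => hord a b hab (hsr _ ((hmem _).1 (List.get_mem l b)) _
      ((hmem _).1 (List.get_mem l a)) (fun heq => hab.ne' (hnd.get_inj_iff.1 heq)) hs)⟩

theorem IsPartialOrderOn.eq_of_forall_linexts_eq {ι : Type*} {r s : V → V → Prop}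
    (hr : IsPartialOrderOn r) (hs : IsPartialOrderOn s) {o : ι → Set V} (ho : ∀ k, (o k).Finite)
    (hcover : ∀ i j, i ≠ j → ∃ k, i ∈ o k ∧ j ∈ o k) (h : ∀ k, linexts r (o k) = linexts s (o k)) :
    r = s := by
  funext a b
  by_cases hab : a = b
  · subst hab
    exact propext (iff_of_false (hr.1 a) (hs.1 a))
  obtain ⟨k, ha, hb⟩ := hcover a b hab
  exact propext ⟨(linexts_subset_linexts_iff hs (ho k)).1 (h k).ge a ha b hb hab,
    (linexts_subset_linexts_iff hr (ho k)).1 (h k).le a ha b hb hab⟩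

theorem finite_linexts [Finite V] (r : V → V → Prop) (o : Set V) : (linexts r o).Finite := by
  have := Fintype.ofFinite V
  refine (List.finite_length_le V (Fintype.card V)).subset fun l hl => ?_
  exact hl.1.length_le_card

theorem IsPartialOrderOn.ncard_linexts_pos [Finite V] {r : V → V → Prop} (hr : IsPartialOrderOn r)
    (o : Set V) : 0 < (linexts r o).ncard :=
  (Set.ncard_pos (finite_linexts r o)).2 (hr.exists_isLinextOn o.toFinite)

end LinearExtensions

section Likelihood

variable {V ι : Type*} [Fintype ι]

open Classical in
noncomputable def likelihood (r : V → V → Prop) (o : ι → Set V) (y : ι → ℕ → List V) (N : ℕ) :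
    ℝ :=
  ∏ k, ∏ j ∈ Finset.range N,
    (if IsLinextOn r (o k) (y k j) then (1 : ℝ) else 0) / ((linexts r (o k)).ncard : ℝ)

variable {r r₀ : V → V → Prop} {o : ι → Set V} {y : ι → ℕ → List V}

theorem likelihood_eq_pow (hy : ∀ k j, y k j ∈ linexts r (o k)) (N : ℕ) :
    likelihood r o y N = (∏ k, ((linexts r (o k)).ncard : ℝ)⁻¹) ^ N := by
  simp only [mem_linexts] at hy
  simp only [likelihood, hy, if_true, one_div, Finset.prod_const, Finset.card_range,
    Finset.prod_pow]

theorem likelihood_eventually_eq_zero {k : ι} {j : ℕ} (hy : y k j ∉ linexts r (o k)) :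
    ∀ᶠ N in atTop, likelihood r o y N = 0 := by
  filter_upwards [eventually_gt_atTop j] with N hN
  refine Finset.prod_eq_zero (Finset.mem_univ k) (Finset.prod_eq_zero (Finset.mem_range.2 hN) ?_)
  rw [if_neg (mem_linexts.not.1 hy), zero_div]

variable [Finite V]

theorem IsPartialOrderOn.likelihood_pos (hr : IsPartialOrderOn r)
    (hy : ∀ k j, y k j ∈ linexts r (o k)) (N : ℕ) : 0 < likelihood r o y N := by
  rw [likelihood_eq_pow hy]
  exact pow_pos (Finset.prod_pos fun k _ => inv_pos.2 (mod_cast hr.ncard_linexts_pos (o k))) N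

theorem tendsto_likelihood_div_likelihood_zero (hr : IsPartialOrderOn r)
    (hr₀ : IsPartialOrderOn r₀) (hne : r ≠ r₀) (hcover : ∀ i j, i ≠ j → ∃ k, i ∈ o k ∧ j ∈ o k)
    (hy : ∀ k j, y k j ∈ linexts r₀ (o k))
    (hrefute : ∀ k, ¬ linexts r₀ (o k) ⊆ linexts r (o k) → ∃ j, y k j ∉ linexts r (o k)) :
    Tendsto (fun N => likelihood r o y N / likelihood r₀ o y N) atTop (𝓝 0) := by
  by_cases hsub : ∀ k, linexts r₀ (o k) ⊆ linexts r (o k)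
  swap
  · obtain ⟨k, hk⟩ := not_forall.1 hsub
    obtain ⟨j, hj⟩ := hrefute k hk
    refine tendsto_const_nhds.congr' ?_
    filter_upwards [likelihood_eventually_eq_zero hj] with N hN
    rw [hN, zero_div]
  obtain ⟨k₀, hk₀⟩ : ∃ k, linexts r₀ (o k) ⊂ linexts r (o k) := by
    by_contra! hnot
    exact hne (hr₀.eq_of_forall_linexts_eq hr (fun k => (o k).toFinite) hcover fun k =>
      ((hsub k).eq_or_ssubset).resolve_right (hnot k)).symm
  have hcard_pos : ∀ k, (0 : ℝ) < (linexts r₀ (o k)).ncard := fun k =>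
    mod_cast hr₀.ncard_linexts_pos (o k)
  have hrate : ∏ k, ((linexts r (o k)).ncard : ℝ)⁻¹ < ∏ k, ((linexts r₀ (o k)).ncard : ℝ)⁻¹ := by
    refine Finset.prod_lt_prod (fun k _ => inv_pos.2 (mod_cast hr.ncard_linexts_pos (o k)))
      (fun k _ => ?_) ⟨k₀, Finset.mem_univ _, ?_⟩
    · exact inv_anti₀ (hcard_pos k) (mod_cast Set.ncard_le_ncard (hsub k) (finite_linexts r _))
    · exact inv_strictAnti₀ (hcard_pos k₀) (mod_cast Set.ncard_lt_ncard hk₀ (finite_linexts r _))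
  simp only [likelihood_eq_pow hy, likelihood_eq_pow fun k j => hsub k (hy k j), ← div_pow]
  exact tendsto_pow_atTop_nhds_zero_of_lt_one (by positivity)
    ((div_lt_one (Finset.prod_pos fun k _ => inv_pos.2 (hcard_pos k))).2 hrate)

end Likelihood

theorem tendsto_div_sum_of_tendsto_div_zero {H : Type*} {F : Finset H} {h₀ : H} (h₀F : h₀ ∈ F)
    {w : H → ℕ → ℝ} (hw₀ : ∀ N, w h₀ N ≠ 0)
    (hw : ∀ h ∈ F, h ≠ h₀ → Tendsto (fun N => w h N / w h₀ N) atTop (𝓝 0)) :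
    Tendsto (fun N => w h₀ N / ∑ h ∈ F, w h N) atTop (𝓝 1) := by
  classical
  have hsum : Tendsto (fun N => ∑ h ∈ F, w h N / w h₀ N) atTop
      (𝓝 (∑ h ∈ F, if h = h₀ then 1 else 0)) := by
    refine tendsto_finsetSum _ fun h hh => ?_
    split_ifs with heq
    · subst heq
      exact tendsto_const_nhds.congr fun N => (div_self (hw₀ N)).symm
    · exact hw h hh heq
  rw [Finset.sum_ite_eq' F h₀, if_pos h₀F] at hsum
  simpa only [← Finset.sum_div, inv_div, inv_one] using hsum.inv₀ one_ne_zero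

theorem tendsto_posterior_one {V ι H : Type*} [Finite V] [Fintype ι] {R : H → V → V → Prop}
    (hR : Function.Injective R) {F : Finset H} (hF : ∀ h ∈ F, IsPartialOrderOn (R h)) {h₀ : H}
    (h₀F : h₀ ∈ F) {π : H → ℝ} (hπ : 0 < π h₀) {o : ι → Set V}
    (hcover : ∀ i j, i ≠ j → ∃ k, i ∈ o k ∧ j ∈ o k) {y : ι → ℕ → List V}
    (hy : ∀ k j, y k j ∈ linexts (R h₀) (o k))
    (hrefute : ∀ h ∈ F, ∀ k, ¬ linexts (R h₀) (o k) ⊆ linexts (R h) (o k) →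
      ∃ j, y k j ∉ linexts (R h) (o k)) :
    Tendsto (fun N => π h₀ * likelihood (R h₀) o y N / ∑ h ∈ F, π h * likelihood (R h) o y N)
      atTop (𝓝 1) := by
  refine tendsto_div_sum_of_tendsto_div_zero (w := fun h N => π h * likelihood (R h) o y N) h₀F
    (fun N => (mul_pos hπ ((hF h₀ h₀F).likelihood_pos hy N)).ne') fun h hh hne => ?_
  simp only [mul_div_mul_comm]
  simpa using ((tendsto_likelihood_div_likelihood_zero (hF h hh) (hF h₀ h₀F) (hR.ne hne) hcover hy
    (hrefute h hh)).const_mul (π h / π h₀))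

section Observations

variable {Ω E : Type*} [MeasurableSpace Ω] [MeasurableSpace E] {μ : Measure Ω}

theorem ae_mem_of_map_eq_uniformOn [MeasurableSingletonClass E] {X : Ω → E}
    (hX : AEMeasurable X μ) {S : Set E} (hS : S.Finite) (h : μ.map X = uniformOn S) :
    ∀ᵐ ω ∂μ, X ω ∈ S :=
  ae_of_ae_map hX <| by
    rw [h, ae_iff]
    exact (uniformOn_eq_zero_iff hS).2 (Set.inter_compl_self S)

theorem uniformOn_lt_one [MeasurableSingletonClass E] {S T : Set E} (hS : S.Finite) {x : E}
    (hxS : x ∈ S) (hxT : x ∉ T) : uniformOn S T < 1 := by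
  rw [← uniformOn_compl T hS ⟨x, hxS⟩]
  refine ENNReal.lt_add_right (measure_ne_top _ _) fun h0 => ?_
  exact ((uniformOn_eq_zero_iff hS).1 h0).subset ⟨hxS, hxT⟩

theorem ae_exists_notMem_of_iIndepFun {X : ℕ → Ω → E} (hX : iIndepFun X μ) {T : Set E}
    (hT : MeasurableSet T) {p : ℝ≥0∞} (hp : p < 1) (hXT : ∀ j, μ (X j ⁻¹' T) ≤ p) :
    ∀ᵐ ω ∂μ, ∃ j, X j ω ∉ T := by
  rw [ae_iff]
  simp only [not_exists, not_not]
  refine le_antisymm (ge_of_tendsto' (ENNReal.tendsto_pow_atTop_nhds_zero_of_lt_one hp)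
    fun J => ?_) bot_le
  calc μ {ω | ∀ j, X j ω ∈ T} ≤ μ (⋂ j ∈ Finset.range J, X j ⁻¹' T) :=
        measure_mono fun ω hω => Set.mem_iInter₂.2 fun j _ => hω j
    _ = ∏ j ∈ Finset.range J, μ (X j ⁻¹' T) :=
        hX.measure_inter_preimage_eq_mul _ fun _ _ => hT
    _ ≤ p ^ J := by
        simpa using Finset.prod_le_prod' (s := Finset.range J) fun j _ => hXT j

theorem ae_exists_notMem_of_map_eq_uniformOn [MeasurableSingletonClass E] {X : ℕ → Ω → E}
    (hX : iIndepFun X μ) (hXm : ∀ j, Measurable (X j)) {S T : Set E} (hS : S.Finite)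
    (hXS : ∀ j, μ.map (X j) = uniformOn S) (hT : T.Finite) (hST : ¬ S ⊆ T) :
    ∀ᵐ ω ∂μ, ∃ j, X j ω ∉ T := by
  obtain ⟨x, hxS, hxT⟩ := Set.not_subset.1 hST
  refine ae_exists_notMem_of_iIndepFun hX hT.measurableSet (uniformOn_lt_one hS hxS hxT)
    fun j => ?_
  rw [← Measure.map_apply (hXm j) hT.measurableSet, hXS j]

end Observations

theorem relOf_injective {n : ℕ} : Function.Injective (relOf (n := n)) := fun _ _ h =>
  funext₂ fun i j => Bool.eq_iff_iff.2 (iff_of_eq (congrFun₂ h i j))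

open Classical in
theorem posterior_consistency_noise_free_general
    (n : ℕ) (m : ℕ) (o : Fin m → Set (Fin n))
    (hcover : ∀ i j : Fin n, i ≠ j → ∃ k, i ∈ o k ∧ j ∈ o k)
    (htrue : Fin n → Fin n → Bool) (hpo : IsPartialOrderOn (relOf htrue))
    (π : (Fin n → Fin n → Bool) → ℝ)
    (hπpos : ∀ h, IsPartialOrderOn (relOf h) → 0 < π h)
    {Ω : Type*} [MeasurableSpace Ω] (μ : Measure Ω)
    [MeasurableSpace (List (Fin n))] [MeasurableSingletonClass (List (Fin n))]
    (Y : Fin m × ℕ → Ω → List (Fin n))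
    (hmeas : ∀ p, Measurable (Y p))
    (hindep : iIndepFun Y μ)
    (hdist : ∀ k j, Measure.map (Y (k, j)) μ =
      uniformOn {l : List (Fin n) | IsLinextOn (relOf htrue) (o k) l}) :
    ∀ᵐ ω ∂μ, Tendsto (fun N : ℕ =>
        (π htrue * ∏ k : Fin m, ∏ j ∈ Finset.range N,
            ((if IsLinextOn (relOf htrue) (o k) (Y (k, j) ω) then (1:ℝ) else 0) /
              ({l : List (Fin n) | IsLinextOn (relOf htrue) (o k) l}.ncard : ℝ))) /
          (∑ h' ∈ Finset.univ.filter (fun h => IsPartialOrderOn (relOf h)),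
            π h' * ∏ k : Fin m, ∏ j ∈ Finset.range N,
              ((if IsLinextOn (relOf h') (o k) (Y (k, j) ω) then (1:ℝ) else 0) /
                ({l : List (Fin n) | IsLinextOn (relOf h') (o k) l}.ncard : ℝ))))
      atTop (nhds 1) := by
  have hobs : ∀ᵐ ω ∂μ, ∀ k j, Y (k, j) ω ∈ linexts (relOf htrue) (o k) :=
    ae_all_iff.2 fun k => ae_all_iff.2 fun j =>
      ae_mem_of_map_eq_uniformOn (hmeas _).aemeasurable (finite_linexts _ _) (hdist k j)
  have hrefute : ∀ᵐ ω ∂μ, ∀ (h : Fin n → Fin n → Bool) k,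
      ¬ linexts (relOf htrue) (o k) ⊆ linexts (relOf h) (o k) →
      ∃ j, Y (k, j) ω ∉ linexts (relOf h) (o k) := by
    refine ae_all_iff.2 fun h => ae_all_iff.2 fun k => ?_
    by_cases hsub : linexts (relOf htrue) (o k) ⊆ linexts (relOf h) (o k)
    · exact ae_of_all _ fun _ hnot => absurd hsub hnot
    filter_upwards [ae_exists_notMem_of_map_eq_uniformOn (X := fun j => Y (k, j))
      (hindep.precomp (Prod.mk_right_injective k)) (fun j => hmeas _) (finite_linexts _ _)
      (hdist k) (finite_linexts _ _) hsub] with ω hω _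
    exact hω
  filter_upwards [hobs, hrefute] with ω hobs hrefute
  exact tendsto_posterior_one relOf_injective (fun h hh => (Finset.mem_filter.1 hh).2)
    (Finset.mem_filter.2 ⟨Finset.mem_univ _, hpo⟩) (hπpos _ hpo) hcover hobs fun h _ => hrefute h

open Classical in
theorem posterior_consistency_noise_free
    (n : ℕ) (hn : 1 ≤ n) (m : ℕ) (o : Fin m → Set (Fin n))
    (hsize : ∀ k, 2 ≤ (o k).ncard)
    (hcover : ∀ i j : Fin n, i ≠ j → ∃ k, i ∈ o k ∧ j ∈ o k)
    (htrue : Fin n → Fin n → Bool) (hpo : IsPartialOrderOn (relOf htrue))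
    (π : (Fin n → Fin n → Bool) → ℝ)
    (hπpos : ∀ h, IsPartialOrderOn (relOf h) → 0 < π h)
    (hπsum : ∑ h ∈ Finset.univ.filter (fun h => IsPartialOrderOn (relOf h)), π h = 1)
    {Ω : Type*} [MeasurableSpace Ω] (μ : Measure Ω) [IsProbabilityMeasure μ]
    [MeasurableSpace (List (Fin n))] [MeasurableSingletonClass (List (Fin n))]
    (Y : Fin m × ℕ → Ω → List (Fin n))
    (hmeas : ∀ p, Measurable (Y p))
    (hindep : iIndepFun Y μ)
    (hdist : ∀ k j, Measure.map (Y (k, j)) μ =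
      uniformOn {l : List (Fin n) | IsLinextOn (relOf htrue) (o k) l}) :
    ∀ᵐ ω ∂μ, Tendsto (fun N : ℕ =>
        (π htrue * ∏ k : Fin m, ∏ j ∈ Finset.range N,
            ((if IsLinextOn (relOf htrue) (o k) (Y (k, j) ω) then (1:ℝ) else 0) /
              ({l : List (Fin n) | IsLinextOn (relOf htrue) (o k) l}.ncard : ℝ))) /
          (∑ h' ∈ Finset.univ.filter (fun h => IsPartialOrderOn (relOf h)),
            π h' * ∏ k : Fin m, ∏ j ∈ Finset.range N,
              ((if IsLinextOn (relOf h') (o k) (Y (k, j) ω) then (1:ℝ) else 0) /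
                ({l : List (Fin n) | IsLinextOn (relOf h') (o k) l}.ncard : ℝ))))
      atTop (nhds 1) :=
  posterior_consistency_noise_free_general n m o hcover htrue hpo π hπpos μ Y hmeas hindep hdist
end
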